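/- Let O' = O ∪ p be a nontrivial single-element extension of an oriented matroid O. If Z = (X ∘ Y, 0) is a new cocircuit of O' derived from the edge X ∘ Y of conformal comodular cocircuits X, Y of O, then the unordered pair {X, Y} is uniquely determined by Z. -/

import Mathlib

open Set

variable {E : Type*}

/-- Support of a sign vector. -/
def supp (X : E → SignType) : Set E := {e | X e ≠ 0}

/-- Zero set of a sign vector. -/
def zset (X : E → SignType) : Set E := {e | X e = 0}

/-- Composition of sign vectors: first nonzero entry wins. -/
def scomp (X Y : E → SignType) : E → SignType := fun e => if X e ≠ 0 then X e else Y e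

/-- Separation set of two sign vectors. -/
def ssep (X Y : E → SignType) : Set E := {e | X e ≠ 0 ∧ X e = -Y e}

/-- `G` covers `F` in the lattice of flats of `M`. -/
def Matroid.FlatCovBy (M : Matroid E) (F G : Set E) : Prop :=
  M.IsFlat F ∧ M.IsFlat G ∧ F ⊂ G ∧ ∀ F', M.IsFlat F' → F ⊆ F' → F' ⊆ G → F' = F ∨ F' = G

/-- A hyperplane: a flat covered by the ground set (corank 1 flat). -/
def Matroid.IsHyperplane (M : Matroid E) (H : Set E) : Prop := M.FlatCovBy H M.E

/-- A coline: a flat of corank 2. -/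
def Matroid.IsColine (M : Matroid E) (F : Set E) : Prop :=
  ∃ H, M.FlatCovBy F H ∧ M.IsHyperplane H

/-- A coplane: a flat of corank 3. -/
def Matroid.IsCoplane (M : Matroid E) (F : Set E) : Prop :=
  ∃ G, M.FlatCovBy F G ∧ M.IsColine G

/-- An oriented matroid, given by its set of cocircuits (sign vectors satisfying the
cocircuit axioms), bundled with its underlying matroid, whose hyperplanes are exactly
the zero sets of the cocircuits. -/
structure OM (E : Type*) where
  M : Matroid E
  ground_eq : M.E = Set.univ
  cocircuits : Set (E → SignType)
  zero_not_mem : (0 : E → SignType) ∉ cocircuits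
  neg_mem : ∀ X ∈ cocircuits, -X ∈ cocircuits
  supp_incomp : ∀ X ∈ cocircuits, ∀ Y ∈ cocircuits, supp X ⊆ supp Y → X = Y ∨ X = -Y
  elim_ax : ∀ X ∈ cocircuits, ∀ Y ∈ cocircuits, X ≠ -Y → ∀ e ∈ ssep X Y,
      ∃ Z ∈ cocircuits, Z e = 0 ∧ ∀ f, Z f = X f ∨ Z f = Y f ∨ Z f = 0
  hyperplane_iff : ∀ H : Set E, M.IsHyperplane H ↔ ∃ X ∈ cocircuits, zset X = H

/-- Covectors: the zero vector together with compositions of cocircuits. -/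
def OM.IsCovector (O : OM E) (X : E → SignType) : Prop :=
  X = 0 ∨ ∃ L : List (E → SignType), L ≠ [] ∧ (∀ Y ∈ L, Y ∈ O.cocircuits) ∧ X = L.foldr scomp 0

/-- An edge: a covector whose zero set is a coline of the underlying matroid. -/
def OM.IsEdge (O : OM E) (F : E → SignType) : Prop := O.IsCovector F ∧ O.M.IsColine (zset F)

/-- Two cocircuits are comodular iff their composition is an edge, i.e. its zero set
is a coline. -/
def OM.Comod (O : OM E) (X Y : E → SignType) : Prop := O.M.IsColine (zset (scomp X Y))

def OM.IsLoopE (O : OM E) (e : E) : Prop := ¬ O.M.Indep {e}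

def OM.IsColoopE (O : OM E) (e : E) : Prop := ∀ B, O.M.IsBase B → e ∈ B

/-- `Z` is the result of cocircuit elimination of `g` between `-X` and `Y`:
a cocircuit vanishing at `g` with support inside `supp((-X) ∘ Y) \ {g}`. -/
def OM.ElimWit (O : OM E) (g : E) (X Y Z : E → SignType) : Prop :=
  Z ∈ O.cocircuits ∧ Z g = 0 ∧ supp Z ⊆ supp (scomp (-X) Y) \ {g}

/-- The direction of the pair `(X,Y)` in the program `(O,g,f)` is `s`:
eliminating `g` between `-X` and `Y` yields `Z` with `Z f = s`. -/
def OM.DirIs (O : OM E) (g f : E) (X Y : E → SignType) (s : SignType) : Prop :=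
  ∃ Z, O.ElimWit g X Y Z ∧ Z f = s

/-- Extend a sign vector on `E` to `Option E`, with value `s` on the new element
`p = none`. -/
def extendP (X : E → SignType) (s : SignType) : Option E → SignType :=
  fun o => o.elim s X

/-- Restrict a sign vector on `Option E` to the old ground set `E`. -/
def restrictP (Z : Option E → SignType) : E → SignType := fun e => Z (some e)

/-- A localization is compatible with negation of cocircuits. -/
def IsOMLocalization (O : OM E) (σ : (E → SignType) → SignType) : Prop :=
  ∀ X ∈ O.cocircuits, σ (-X) = -σ X

/-- The cocircuits of the single-element extension determined by the localization `σ`: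
the old cocircuits `(Y, σ(Y))` and the new cocircuits `(Y¹ ∘ Y², 0)` coming from
conformal comodular pairs with opposite nonzero localization values. -/
def extCocircuits (O : OM E) (σ : (E → SignType) → SignType) :
    Set (Option E → SignType) :=
  {Z | ∃ Y ∈ O.cocircuits, Z = extendP Y (σ Y)} ∪
  {Z | ∃ Y₁ ∈ O.cocircuits, ∃ Y₂ ∈ O.cocircuits, ssep Y₁ Y₂ = ∅ ∧
      σ Y₁ = -σ Y₂ ∧ σ Y₁ ≠ 0 ∧ O.M.IsColine (zset (scomp Y₁ Y₂)) ∧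
      Z = extendP (scomp Y₁ Y₂) 0}

/-- `O' = O ∪ p` (with `p = none`) is the single-element extension of `O` given by the
localization `σ`. -/
def IsExtension (O : OM E) (O' : OM (Option E)) (σ : (E → SignType) → SignType) : Prop :=
  IsOMLocalization O σ ∧ O'.cocircuits = extCocircuits O σ

/-- A cocircuit of the extension is old if it is derived from a cocircuit of `O`. -/
def IsOld (O : OM E) (σ : (E → SignType) → SignType) (Z : Option E → SignType) : Prop :=
  ∃ Y ∈ O.cocircuits, Z = extendP Y (σ Y)

/-! ### Auxiliary sign lemmas -/

lemma sign_eq_of_conf : ∀ a b : SignType, a ≠ 0 → b ≠ 0 → a ≠ -b → a = b := by decide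

lemma sign_self_neg : ∀ a : SignType, a = -a → a = 0 := by decide

lemma sign_neg_swap : ∀ a b : SignType, a = -b → b = -a := by decide

lemma sign_neg_neg : ∀ a : SignType, -(-a) = a := by decide

lemma sign_neg_zero : ∀ a : SignType, a = -0 → a = 0 := by decide

/-! ### Auxiliary matroid lemmas -/

lemma Matroid.closure_flat' (M : Matroid E) (X : Set E) : M.IsFlat (M.closure X) := by
  rw [Matroid.closure_def, Set.sInter_eq_iInter]
  have hne : Nonempty {F : Set E // F ∈ {F | M.IsFlat F ∧ X ∩ M.E ⊆ F}} :=
    ⟨⟨M.E, M.ground_isFlat, Set.inter_subset_right⟩⟩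
  exact Matroid.IsFlat.iInter fun F => F.2.1

lemma Matroid.IsFlat.inter' {M : Matroid E} {F G : Set E} (hF : M.IsFlat F) (hG : M.IsFlat G) :
    M.IsFlat (F ∩ G) := by
  rw [Set.inter_eq_iInter]
  exact Matroid.IsFlat.iInter (fun b => by cases b <;> simpa)

lemma flatCovBy_closure_insert {M : Matroid E} {F : Set E} {e : E} (ME : M.E = univ)
    (hF : M.IsFlat F) (he : e ∉ F) : M.FlatCovBy F (M.closure (insert e F)) := by
  have hg : ∀ S : Set E, S ⊆ M.E := fun S => ME ▸ subset_univ S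
  have hFG : F ⊆ M.closure (insert e F) :=
    (subset_insert e F).trans (M.subset_closure _ (hg _))
  have heG : e ∈ M.closure (insert e F) := M.subset_closure _ (hg _) (mem_insert e F)
  refine ⟨hF, M.closure_flat' _, hFG.ssubset_of_ne (fun h => he (h ▸ heG)), ?_⟩
  intro F' hF' hFF' hF'G
  by_cases hEq : F' = F
  · exact Or.inl hEq
  right
  obtain ⟨f, hfF', hfF⟩ : ∃ f, f ∈ F' ∧ f ∉ F := by
    by_contra hcon; push_neg at hcon
    exact hEq (subset_antisymm (fun x hx => hcon x hx) hFF')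
  have hf : f ∈ M.closure (insert e F) \ M.closure F := by
    rw [hF.closure]; exact ⟨hF'G hfF', hfF⟩
  have hef := Matroid.closure_exchange hf
  have heF' : e ∈ F' := by
    have hsub : M.closure (insert f F) ⊆ F' := by
      rw [← hF'.closure]; exact M.closure_subset_closure (insert_subset hfF' hFF')
    exact hsub hef.1
  refine subset_antisymm hF'G ?_
  rw [← hF'.closure]
  exact M.closure_subset_closure (insert_subset heF' hFF')

lemma Matroid.FlatCovBy.eq_closure_insert {M : Matroid E} {F G : Set E} {e : E}
    (h : M.FlatCovBy F G) (he : e ∈ G) (heF : e ∉ F) (ME : M.E = univ) :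
    G = M.closure (insert e F) := by
  obtain ⟨hF, hG, hlt, hmax⟩ := h
  have hg : ∀ S : Set E, S ⊆ M.E := fun S => ME ▸ subset_univ S
  have h1 : M.closure (insert e F) ⊆ G := by
    rw [← hG.closure]; exact M.closure_subset_closure (insert_subset he hlt.subset)
  have h2 : F ⊆ M.closure (insert e F) :=
    (subset_insert e F).trans (M.subset_closure _ (hg _))
  rcases hmax _ (M.closure_flat' _) h2 h1 with h | h
  · exact absurd (h ▸ (M.subset_closure (insert e F) (hg _) (mem_insert _ _))) heF
  · exact h.symm

lemma corank_two_aux {M : Matroid E} {L H0 G K : Set E} (ME : M.E = univ)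
    (hLH0 : M.FlatCovBy L H0) (hH0 : M.FlatCovBy H0 M.E)
    (hLG : M.FlatCovBy L G) (hGK : M.FlatCovBy G K) : K = M.E := by
  have hg : ∀ S : Set E, S ⊆ M.E := fun S => ME ▸ subset_univ S
  obtain ⟨e, heG, heL⟩ := exists_of_ssubset hLG.2.2.1
  obtain ⟨f, hfK, hfG⟩ := exists_of_ssubset hGK.2.2.1
  obtain ⟨h, hhH0, hhL⟩ := exists_of_ssubset hLH0.2.2.1
  obtain ⟨y, hyE, hyH0⟩ := exists_of_ssubset hH0.2.2.1
  have hGeq : G = M.closure (insert e L) := hLG.eq_closure_insert heG heL ME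
  have hH0eq : H0 = M.closure (insert h L) := hLH0.eq_closure_insert hhH0 hhL ME
  have hEeq : M.E = M.closure (insert y H0) := hH0.eq_closure_insert hyE hyH0 ME
  have hLflat := hLG.1
  have hGflat := hLG.2.1
  have hKflat := hGK.2.1
  have hGKsub : G ⊆ K := hGK.2.2.1.subset
  have hLGsub : L ⊆ G := hLG.2.2.1.subset
  by_cases heH0 : e ∈ H0
  · have he' : e ∈ M.closure (insert h L) \ M.closure L := by
      rw [hLflat.closure]; exact ⟨hH0eq ▸ heH0, heL⟩
    have hh : h ∈ M.closure (insert e L) := (Matroid.closure_exchange he').1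
    have hhG : h ∈ G := hGeq ▸ hh
    have hH0G : H0 ⊆ G := by
      rw [hH0eq, ← hGflat.closure]
      exact M.closure_subset_closure (insert_subset hhG hLGsub)
    have hsub : M.E ⊆ M.closure (insert y G) := by
      rw [hEeq]
      exact M.closure_subset_closure (insert_subset_insert hH0G)
    have hf' : f ∈ M.closure (insert y G) \ M.closure G := by
      rw [hGflat.closure]; exact ⟨hsub (hg K hfK), hfG⟩
    have hy : y ∈ M.closure (insert f G) := (Matroid.closure_exchange hf').1
    have hyK : y ∈ K := by
      have hsub2 : M.closure (insert f G) ⊆ K := by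
        rw [← hKflat.closure]; exact M.closure_subset_closure (insert_subset hfK hGKsub)
      exact hsub2 hy
    refine subset_antisymm hKflat.subset_ground (hsub.trans ?_)
    rw [← hKflat.closure]
    exact M.closure_subset_closure (insert_subset hyK hGKsub)
  · have heE : e ∈ M.E := by rw [ME]; trivial
    have hH0flat := hLH0.2.1
    have he' : e ∈ M.closure (insert y H0) \ M.closure H0 := by
      rw [hH0flat.closure]; exact ⟨hEeq ▸ heE, heH0⟩
    have hy' : y ∈ M.closure (insert e H0) := (Matroid.closure_exchange he').1
    have hkey : M.closure (insert e H0) = M.closure (insert h G) := by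
      rw [hH0eq, hGeq, Matroid.closure_insert_closure_eq_closure_insert,
        Matroid.closure_insert_closure_eq_closure_insert, Set.insert_comm]
    have hEsub : M.E ⊆ M.closure (insert h G) := by
      rw [hEeq]
      refine Matroid.closure_subset_closure_of_subset_closure (insert_subset ?_ ?_)
      · exact hkey ▸ hy'
      · rw [hH0eq]
        exact M.closure_subset_closure (insert_subset_insert hLGsub)
    have hf' : f ∈ M.closure (insert h G) \ M.closure G := by
      rw [hGflat.closure]; exact ⟨hEsub (hg K hfK), hfG⟩
    have hh' : h ∈ M.closure (insert f G) := (Matroid.closure_exchange hf').1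
    have hhK : h ∈ K := by
      have hsub2 : M.closure (insert f G) ⊆ K := by
        rw [← hKflat.closure]; exact M.closure_subset_closure (insert_subset hfK hGKsub)
      exact hsub2 hh'
    refine subset_antisymm hKflat.subset_ground (hEsub.trans ?_)
    rw [← hKflat.closure]
    exact M.closure_subset_closure (insert_subset hhK hGKsub)

lemma hyp_not_coline {M : Matroid E} {L : Set E} (hH : M.IsHyperplane L)
    (hL : M.IsColine L) : False := by
  obtain ⟨H0, hLH0, hH0⟩ := hL
  rcases hH.2.2.2 H0 hLH0.2.1 hLH0.2.2.1.subset hH0.2.2.1.subset with h | h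
  · exact hLH0.2.2.1.ne' h
  · exact hH0.2.2.1.ne h

lemma coline_flatCovBy_hyperplane {M : Matroid E} {L H : Set E} (ME : M.E = univ)
    (hL : M.IsColine L) (hH : M.IsHyperplane H) (hsub : L ⊆ H) : M.FlatCovBy L H := by
  obtain ⟨H0, hLH0, hH0⟩ := hL
  have hLflat := hLH0.1
  have hHflat := hH.1
  have hLne : L ≠ H := by
    rintro rfl
    exact hyp_not_coline hH ⟨H0, hLH0, hH0⟩
  refine ⟨hLflat, hHflat, hsub.ssubset_of_ne hLne, ?_⟩
  intro F' hF' hLF' hF'H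
  by_cases h1 : F' = L
  · exact Or.inl h1
  by_cases h2 : F' = H
  · exact Or.inr h2
  exfalso
  obtain ⟨e, heF', heL⟩ : ∃ e ∈ F', e ∉ L := exists_of_ssubset (hLF'.ssubset_of_ne (Ne.symm h1))
  have hLG : M.FlatCovBy L (M.closure (insert e L)) := flatCovBy_closure_insert ME hLflat heL
  have hGF' : M.closure (insert e L) ⊆ F' := by
    rw [← hF'.closure]; exact M.closure_subset_closure (insert_subset heF' hLF')
  obtain ⟨f, hfH, hfF'⟩ : ∃ f ∈ H, f ∉ F' := exists_of_ssubset (hF'H.ssubset_of_ne h2)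
  have hfG : f ∉ M.closure (insert e L) := fun hc => hfF' (hGF' hc)
  have hGK : M.FlatCovBy (M.closure (insert e L))
      (M.closure (insert f (M.closure (insert e L)))) :=
    flatCovBy_closure_insert ME hLG.2.1 hfG
  have hKH : M.closure (insert f (M.closure (insert e L))) ⊆ H := by
    rw [← hHflat.closure]
    exact M.closure_subset_closure (insert_subset hfH (hGF'.trans hF'H))
  have hKE := corank_two_aux ME hLH0 hH0 hLG hGK
  exact hH.2.2.1.not_subset (hKE ▸ hKH)

/-! ### Auxiliary oriented matroid lemmas -/

lemma scomp_apply_of_ne {X Y : E → SignType} {e : E} (h : X e ≠ 0) : scomp X Y e = X e :=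
  if_pos h

lemma scomp_apply_of_eq {X Y : E → SignType} {e : E} (h : X e = 0) : scomp X Y e = Y e :=
  if_neg (not_not_intro h)

lemma scomp_self (X : E → SignType) : scomp X X = X := by
  funext e
  by_cases h : X e ≠ 0
  · exact scomp_apply_of_ne h
  · push_neg at h; rw [scomp_apply_of_eq h]

lemma zset_scomp (X Y : E → SignType) : zset (scomp X Y) = zset X ∩ zset Y := by
  ext e
  simp only [zset, mem_setOf_eq, mem_inter_iff]
  by_cases h : X e = 0
  · rw [scomp_apply_of_eq h]; tauto
  · rw [scomp_apply_of_ne h]; tauto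

lemma OM.exists_supp_ne (O : OM E) {X : E → SignType} (hX : X ∈ O.cocircuits) :
    ∃ e, X e ≠ 0 := by
  by_contra hcon
  push_neg at hcon
  exact O.zero_not_mem (by rwa [(funext hcon : X = 0)] at hX)

lemma OM.cocircuit_hyperplane (O : OM E) {X : E → SignType} (hX : X ∈ O.cocircuits) :
    O.M.IsHyperplane (zset X) :=
  (O.hyperplane_iff (zset X)).2 ⟨X, hX, rfl⟩

lemma OM.supp_subset_of_zset_subset (O : OM E) {X Y : E → SignType} (h : zset X ⊆ zset Y) :
    supp Y ⊆ supp X := fun e he => fun hc => he (h hc)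

/-- Key lemma: a cocircuit conforming to `X ∘ Y` (where `X, Y` are conformal comodular
cocircuits) is equal to `X` or `Y`. -/
lemma OM.conform_mem (O : OM E) {X Y C : E → SignType}
    (hX : X ∈ O.cocircuits) (hY : Y ∈ O.cocircuits) (hC : C ∈ O.cocircuits)
    (hconf : ssep X Y = ∅) (hcol : O.M.IsColine (zset (scomp X Y)))
    (hCW : ∀ e, C e ≠ 0 → C e = scomp X Y e) :
    C = X ∨ C = Y := by
  have hXY : X ≠ Y := by
    intro h
    rw [h, scomp_self] at hcol
    exact hyp_not_coline (O.cocircuit_hyperplane hY) hcol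
  set W := scomp X Y with hW
  set L := zset W with hLdef
  have ME := O.ground_eq
  have hsepXY : ∀ e, X e ≠ 0 → Y e ≠ 0 → X e = Y e := by
    intro e hx hy
    have hne : ¬ (X e ≠ 0 ∧ X e = -Y e) := by
      intro hc
      exact (Set.eq_empty_iff_forall_notMem.1 hconf e) hc
    push_neg at hne
    exact sign_eq_of_conf _ _ hx hy (hne hx)
  have hXW : ∀ e, X e ≠ 0 → X e = W e := fun e h => (scomp_apply_of_ne h).symm
  have hYW : ∀ e, Y e ≠ 0 → Y e = W e := by
    intro e hy
    by_cases hx : X e = 0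
    · exact (scomp_apply_of_eq hx).symm
    · rw [← hsepXY e hx hy]; exact hXW e hx
  have hLXY : L = zset X ∩ zset Y := zset_scomp X Y
  have hLzC : L ⊆ zset C := by
    intro e he
    by_contra hc
    have h1 : C e = W e := hCW e hc
    exact hc (show C e = 0 from h1.trans he)
  by_cases hCX : C = X
  · exact Or.inl hCX
  by_cases hCY : C = Y
  · exact Or.inr hCY
  exfalso
  -- C ≠ -X, C ≠ -Y
  have hCnegX : C ≠ -X := by
    intro h
    obtain ⟨e, he⟩ := O.exists_supp_ne hC
    have h1 : C e = W e := hCW e he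
    have h2 : C e = -(X e) := congrFun h e
    have hx : X e ≠ 0 := by
      intro hc; rw [hc] at h2; exact he (sign_neg_zero _ h2)
    have h3 : X e = W e := hXW e hx
    rw [h1, ← h3] at h2
    exact hx (sign_self_neg _ h2)
  have hCnegY : C ≠ -Y := by
    intro h
    obtain ⟨e, he⟩ := O.exists_supp_ne hC
    have h1 : C e = W e := hCW e he
    have h2 : C e = -(Y e) := congrFun h e
    have hy : Y e ≠ 0 := by
      intro hc; rw [hc] at h2; exact he (sign_neg_zero _ h2)
    have h3 : Y e = W e := hYW e hy
    rw [h1, ← h3] at h2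
    exact hy (sign_self_neg _ h2)
  -- key: cocircuits whose zero set contains zset C are ±C
  have key : ∀ U, U ∈ O.cocircuits → zset C ⊆ zset U → C = U ∨ C = -U := by
    intro U hU hzCU
    rcases O.supp_incomp U hU C hC (O.supp_subset_of_zset_subset hzCU) with h | h
    · exact Or.inl h.symm
    · refine Or.inr (funext fun e => ?_)
      have := congrFun h e
      exact sign_neg_swap _ _ this
  have hcolL : O.M.IsColine L := hcol
  have hHC := O.cocircuit_hyperplane hC
  have hHX := O.cocircuit_hyperplane hX
  have hHY := O.cocircuit_hyperplane hY
  have covLC : O.M.FlatCovBy L (zset C) := coline_flatCovBy_hyperplane ME hcolL hHC hLzC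
  -- zset C ∩ zset X = L and zset C ∩ zset Y = L
  have hzCX : zset C ∩ zset X = L := by
    rcases covLC.2.2.2 (zset C ∩ zset X) (hHC.1.inter' hHX.1)
        (subset_inter hLzC (hLXY ▸ inter_subset_left)) inter_subset_left with h | h
    · exact h
    · exfalso
      have hsub2 : zset C ⊆ zset X := h ▸ inter_subset_right
      rcases key X hX hsub2 with h' | h'
      · exact hCX h'
      · exact hCnegX h'
  have hzCY : zset C ∩ zset Y = L := by
    rcases covLC.2.2.2 (zset C ∩ zset Y) (hHC.1.inter' hHY.1)
        (subset_inter hLzC (hLXY ▸ inter_subset_right)) inter_subset_left with h | h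
    · exact h
    · exfalso
      have hsub2 : zset C ⊆ zset Y := h ▸ inter_subset_right
      rcases key Y hY hsub2 with h' | h'
      · exact hCY h'
      · exact hCnegY h'
  -- pick g in zset C \ L
  have hLneC : L ≠ zset C := by
    rintro h
    exact hyp_not_coline (h ▸ hHC) hcolL
  obtain ⟨g, hgC, hgL⟩ : ∃ g ∈ zset C, g ∉ L := exists_of_ssubset (hLzC.ssubset_of_ne hLneC)
  have hgX : X g ≠ 0 := fun hc => hgL (hzCX ▸ (⟨hgC, hc⟩ : g ∈ zset C ∩ zset X))
  have hgY : Y g ≠ 0 := fun hc => hgL (hzCY ▸ (⟨hgC, hc⟩ : g ∈ zset C ∩ zset Y))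
  -- eliminate between X and -Y at g
  have hnegnegY : -(-Y) = Y := funext fun e => sign_neg_neg (Y e)
  have hXnnY : X ≠ -(-Y) := fun hc => hXY (hc.trans hnegnegY)
  have hgsep : g ∈ ssep X (-Y) := by
    refine ⟨hgX, ?_⟩
    show X g = -(-(Y g))
    rw [sign_neg_neg]
    exact hsepXY g hgX hgY
  obtain ⟨D, hD, hDg, hDf⟩ := O.elim_ax X hX (-Y) (O.neg_mem Y hY) hXnnY g hgsep
  -- L ⊆ zset D
  have hLzD : L ⊆ zset D := by
    intro e he
    have heXY : e ∈ zset X ∩ zset Y := hLXY ▸ he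
    have hex : X e = 0 := heXY.1
    have hey : Y e = 0 := heXY.2
    show D e = 0
    rcases hDf e with h | h | h
    · rw [h, hex]
    · rw [h]; show -(Y e) = 0; rw [hey]; rfl
    · exact h
  -- zset C ⊆ zset D
  have hzCD : zset C ⊆ zset D := by
    rcases covLC.2.2.2 (zset D ∩ zset C)
        ((O.cocircuit_hyperplane hD).1.inter' hHC.1)
        (subset_inter hLzD hLzC) inter_subset_right with h | h
    · exact absurd (h ▸ (⟨hDg, hgC⟩ : g ∈ zset D ∩ zset C)) hgL
    · exact fun e he => (h.symm ▸ he : e ∈ zset D ∩ zset C).1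
  -- pick eA ∈ zset X \ L and eB ∈ zset Y \ L
  have hLneX : L ≠ zset X := fun h => hyp_not_coline (h ▸ hHX) hcolL
  have hLneY : L ≠ zset Y := fun h => hyp_not_coline (h ▸ hHY) hcolL
  obtain ⟨eA, heAX, heAL⟩ : ∃ e ∈ zset X, e ∉ L :=
    exists_of_ssubset (((hLXY ▸ inter_subset_left : L ⊆ zset X)).ssubset_of_ne hLneX)
  obtain ⟨eB, heBY, heBL⟩ : ∃ e ∈ zset Y, e ∉ L :=
    exists_of_ssubset (((hLXY ▸ inter_subset_right : L ⊆ zset Y)).ssubset_of_ne hLneY)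
  have heAC : C eA ≠ 0 := fun hc => heAL (hzCX ▸ (⟨hc, heAX⟩ : eA ∈ zset C ∩ zset X))
  have heBC : C eB ≠ 0 := fun hc => heBL (hzCY ▸ (⟨hc, heBY⟩ : eB ∈ zset C ∩ zset Y))
  have hCeA : C eA = Y eA := by
    rw [hCW eA heAC]; exact scomp_apply_of_eq heAX
  have hCeB : C eB = X eB := by
    rw [hCW eB heBC]; exact scomp_apply_of_ne (fun hc => heBL (hLXY ▸ (⟨hc, heBY⟩ : eB ∈ zset X ∩ zset Y)))
  have sign_negz : ∀ a : SignType, -a = 0 → a = 0 := by decide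
  rcases key D hD hzCD with hCD | hCD
  · -- C = D; contradiction at eA
    have hYA : Y eA ≠ 0 := fun hc => heAC (hCeA.trans hc)
    have hDeA : D eA = Y eA := hCD ▸ hCeA
    rcases hDf eA with h | h | h
    · exact hYA (hDeA.symm.trans (h.trans heAX))
    · have h2 : D eA = -(Y eA) := h
      exact hYA (sign_self_neg _ (hDeA.symm.trans h2))
    · exact hYA (hDeA.symm.trans h)
  · -- C = -D; contradiction at eB
    have hXB : X eB ≠ 0 := fun hc => heBC (hCeB.trans hc)
    have hDeB : D eB = -(X eB) := by
      have h1 : C eB = -(D eB) := congrFun hCD eB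
      have h2 : D eB = -(C eB) := sign_neg_swap _ _ h1
      rw [h2, hCeB]
    rcases hDf eB with h | h | h
    · exact hXB (sign_self_neg _ (h.symm.trans hDeB))
    · have h2 : D eB = -(Y eB) := h
      have h3 : -(X eB) = 0 := by
        rw [← hDeB, h2, (heBY : Y eB = 0)]; rfl
      exact hXB (sign_negz _ h3)
    · exact hXB (sign_negz _ (hDeB.symm.trans h))

/-- the unordered pair of conformal comodular cocircuits giving rise to a
new cocircuit of a single-element extension is unique. -/
theorem new_cocircuit_pair_unique (O : OM E) (O' : OM (Option E))
    (σ : (E → SignType) → SignType) (hext : IsExtension O O' σ)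
    (Z : Option E → SignType) (hZ : Z ∈ O'.cocircuits)
    (X Y X' Y' : E → SignType)
    (hX : X ∈ O.cocircuits) (hY : Y ∈ O.cocircuits)
    (hconf : ssep X Y = ∅) (hσ : σ X = -σ Y) (hσ0 : σ X ≠ 0)
    (hcol : O.M.IsColine (zset (scomp X Y))) (hZeq : Z = extendP (scomp X Y) 0)
    (hX' : X' ∈ O.cocircuits) (hY' : Y' ∈ O.cocircuits)
    (hconf' : ssep X' Y' = ∅) (hσ' : σ X' = -σ Y') (hσ0' : σ X' ≠ 0)
    (hcol' : O.M.IsColine (zset (scomp X' Y'))) (hZeq' : Z = extendP (scomp X' Y') 0) :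
    (X' = X ∧ Y' = Y) ∨ (X' = Y ∧ Y' = X) := by
  have hWeq : scomp X' Y' = scomp X Y := by
    funext e
    have h := congrFun (hZeq.symm.trans hZeq') (some e)
    exact h.symm
  have hsepXY' : ∀ e, X' e ≠ 0 → Y' e ≠ 0 → X' e = Y' e := by
    intro e hx hy
    have hne : ¬ (X' e ≠ 0 ∧ X' e = -Y' e) := fun hc =>
      (Set.eq_empty_iff_forall_notMem.1 hconf' e) hc
    push_neg at hne
    exact sign_eq_of_conf _ _ hx hy (hne hx)
  have hX'W : ∀ e, X' e ≠ 0 → X' e = scomp X Y e := by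
    intro e h
    rw [← hWeq]
    exact (scomp_apply_of_ne h).symm
  have hY'W : ∀ e, Y' e ≠ 0 → Y' e = scomp X Y e := by
    intro e h
    rw [← hWeq]
    by_cases hx : X' e = 0
    · exact (scomp_apply_of_eq hx).symm
    · rw [← hsepXY' e hx h]
      exact (scomp_apply_of_ne hx).symm
  have hX'mem : X' = X ∨ X' = Y := O.conform_mem hX hY hX' hconf hcol hX'W
  have hY'mem : Y' = X ∨ Y' = Y := O.conform_mem hX hY hY' hconf hcol hY'W
  have hXX : ¬ (scomp X Y = X) := by
    intro h
    rw [h] at hcol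
    exact hyp_not_coline (O.cocircuit_hyperplane hX) hcol
  have hYY : ¬ (scomp X Y = Y) := by
    intro h
    rw [h] at hcol
    exact hyp_not_coline (O.cocircuit_hyperplane hY) hcol
  rcases hX'mem with h1 | h1 <;> rcases hY'mem with h2 | h2
  · exfalso
    apply hXX
    rw [← hWeq, h1, h2, scomp_self]
  · exact Or.inl ⟨h1, h2⟩
  · exact Or.inr ⟨h1, h2⟩
  · exfalso
    apply hYY
    rw [← hWeq, h1, h2, scomp_self]
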